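/- arXiv:2003.08480 — 5 statements merged into one kernel-verified Lean document; each statement's English description precedes it below -/
import Mathlib

section
/- Let (x_i) for i = 0,...,q+1 be nonnegative integers satisfying Σ x_i = q², Σ i·x_i = q²+q, and Σ i(i-1)·x_i = q²+q. If x_i = 0 for all i > q+1-k (where 0 ≤ k ≤ q), then x_0 ≥ qk/(q+1-k). -/
/-- For nonnegative integers `x_0, …, x_{q+1}` with `Σ x_i = q²`, `Σ i·x_i = q² + q`,
`Σ i(i-1)·x_i = q² + q`, if `x_i = 0` for all `i > q+1-k` (with `0 ≤ k ≤ q`), then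
`x_0 ≥ qk/(q+1-k)`. -/
theorem x0_lower_bound (q k : ℕ) (hq : 1 ≤ q) (hk : k ≤ q) (x : ℕ → ℕ)
    (h1 : ∑ i ∈ Finset.range (q + 2), x i = q ^ 2)
    (h2 : ∑ i ∈ Finset.range (q + 2), i * x i = q ^ 2 + q)
    (h3 : ∑ i ∈ Finset.range (q + 2), i * (i - 1) * x i = q ^ 2 + q)
    (hzero : ∀ i, q + 1 - k < i → x i = 0) :
    (q : ℚ) * k / (q + 1 - k) ≤ (x 0 : ℚ) := by
  set N := q + 1 - k with hNdef
  have hN1 : 1 ≤ N := by omega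
  have hNZ : (N : ℤ) = (q : ℤ) + 1 - k := by
    rw [hNdef, Nat.cast_sub (by omega : k ≤ q + 1)]; push_cast; ring
  have h1' : ∑ i ∈ Finset.range (q + 2), (x i : ℤ) = (q : ℤ) ^ 2 := by
    exact_mod_cast h1
  have h2' : ∑ i ∈ Finset.range (q + 2), (i : ℤ) * x i = (q : ℤ) ^ 2 + q := by
    exact_mod_cast h2
  have h3' : ∑ i ∈ Finset.range (q + 2), (i : ℤ) * ((i : ℤ) - 1) * x i = (q : ℤ) ^ 2 + q := by
    have : ((q ^ 2 + q : ℕ) : ℤ) = (q : ℤ) ^ 2 + q := by push_cast; ring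
    rw [← this, ← h3, Nat.cast_sum]
    refine Finset.sum_congr rfl fun i _ => ?_
    rcases i with _ | j
    · simp
    · push_cast [Nat.succ_sub_one]; ring
  have hS : ∑ i ∈ Finset.range (q + 2), ((i : ℤ) - 1) * ((N : ℤ) - i) * x i
      = -((q : ℤ) * k) := by
    have expand : ∀ i ∈ Finset.range (q + 2),
        ((i : ℤ) - 1) * ((N : ℤ) - i) * x i
          = (N : ℤ) * ((i : ℤ) * x i) - (i : ℤ) * ((i : ℤ) - 1) * x i - (N : ℤ) * x i := by
      intro i _; ring
    rw [Finset.sum_congr rfl expand, Finset.sum_sub_distrib, Finset.sum_sub_distrib,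
      ← Finset.mul_sum, ← Finset.mul_sum, h1', h2', h3', hNZ]
    ring
  have hlow : -((N : ℤ) * x 0) ≤ ∑ i ∈ Finset.range (q + 2), ((i : ℤ) - 1) * ((N : ℤ) - i) * x i := by
    rw [Finset.sum_range_succ']
    have h0 : ((0 : ℕ) : ℤ) - 1 = -1 := by norm_num
    have hnn : 0 ≤ ∑ i ∈ Finset.range (q + 1),
        (((i + 1 : ℕ) : ℤ) - 1) * ((N : ℤ) - ((i + 1 : ℕ) : ℤ)) * x (i + 1) := by
      apply Finset.sum_nonneg
      intro i _
      by_cases hx : x (i + 1) = 0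
      · simp [hx]
      · have hle : i + 1 ≤ N := by by_contra h; exact hx (hzero _ (by omega))
        have h1i : (0 : ℤ) ≤ ((i + 1 : ℕ) : ℤ) - 1 := by push_cast; omega
        have h2i : (0 : ℤ) ≤ (N : ℤ) - ((i + 1 : ℕ) : ℤ) := by
          have : ((i + 1 : ℕ) : ℤ) ≤ (N : ℤ) := by exact_mod_cast hle
          omega
        exact mul_nonneg (mul_nonneg h1i h2i) (by positivity)
    have : (((0 : ℕ) : ℤ) - 1) * ((N : ℤ) - ((0 : ℕ) : ℤ)) * x 0 = -((N : ℤ) * x 0) := by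
      push_cast; ring
    rw [this]
    linarith
  have hkey : (q : ℤ) * k ≤ (N : ℤ) * x 0 := by
    rw [hS] at hlow; linarith
  have hNQ : ((q : ℚ) + 1 - k) = (N : ℚ) := by
    rw [hNdef, Nat.cast_sub (by omega : k ≤ q + 1)]; push_cast; ring
  rw [hNQ, div_le_iff₀ (by exact_mod_cast Nat.pos_of_ne_zero (by omega))]
  have : ((q : ℤ) * k : ℤ) ≤ ((x 0 : ℤ) * N : ℤ) := by linarith
  exact_mod_cast this
end

section
/- In an affine plane of order q, let 𝓛 be a Kakeya line set (one line per parallel class) and suppose P is a point lying on exactly q+1-k lines of 𝓛. Then the number of points not covered by any line of 𝓛 is at least k(q-k). -/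
/-- An affine plane of order `q`: `q²` points, every line has `q` points, the lines fall
into `q+1` parallel classes each of which partitions the point set (every point lies on a
unique line of each class), and two non-parallel lines meet in exactly one point. -/
structure AffinePlaneOrder (q : ℕ) where
  Point : Type
  Line : Type
  mem : Point → Line → Prop
  pointCount : Nat.card Point = q ^ 2
  lineSize : ∀ l : Line, {p : Point | mem p l}.ncard = q
  parClass : Line → Fin (q + 1)
  point_class : ∀ (p : Point) (c : Fin (q + 1)), ∃! l : Line, parClass l = c ∧ mem p l
  meet : ∀ l m : Line, parClass l ≠ parClass m → ∃! p : Point, mem p l ∧ mem p m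

/-- A Kakeya line set: one line from each parallel class. -/
def IsKakeyaLines {q : ℕ} (A : AffinePlaneOrder q) (L : Fin (q + 1) → A.Line) : Prop :=
  ∀ c, A.parClass (L c) = c

/-- The Kakeya set determined by the lines `L`: all points covered by some line of `L`. -/
def kakeyaSet {q : ℕ} (A : AffinePlaneOrder q) (L : Fin (q + 1) → A.Line) : Set A.Point :=
  {p | ∃ c, A.mem p (L c)}

/-- The number of lines of `L` through `p`; `p` is a `j`-knot when this equals `j`. -/
noncomputable def knotCount {q : ℕ} (A : AffinePlaneOrder q) (L : Fin (q + 1) → A.Line) (p : A.Point) : ℕ :=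
  {c : Fin (q + 1) | A.mem p (L c)}.ncard

/-!
Let `K` be the set of the `k` classes whose line in `𝓛` misses `P`, and for `c ∈ K` let `ℓ_c` be
the line of class `c` through `P`. A point `p ≠ P` of `ℓ_c` covered by `𝓛` lies on `L c'` with
`c' ∈ K \ {c}`: the parallel line `L c` misses `ℓ_c`, and a line of `𝓛` through `P` meets `ℓ_c`
only in `P`. Each such `L c'` meets `ℓ_c` at most once, so at least `(q - 1) - (k - 1)` points
of `ℓ_c \ {P}` are uncovered. The sets `ℓ_c \ {P}` are pairwise disjoint, which gives `k (q - k)`.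
-/

theorem Finset.sum_ncard_inter_le_ncard {ι α : Type*} (K : Finset ι) {S : ι → Set α}
    (hS : (K : Set ι).PairwiseDisjoint S) {U : Set α} (hU : U.Finite) :
    ∑ i ∈ K, (S i ∩ U).ncard ≤ U.ncard := by
  rw [← finsum_mem_coe_finset, ← K.finite_toSet.ncard_biUnion
    (fun i _ => hU.subset Set.inter_subset_right) (hS.mono fun i => Set.inter_subset_left)]
  exact Set.ncard_le_ncard (Set.iUnion₂_subset fun _ _ => Set.inter_subset_right) hU

namespace AffinePlaneOrder

variable {q : ℕ} (A : AffinePlaneOrder q)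

lemma finite_point (hq : q ≠ 0) : Finite A.Point :=
  Nat.finite_of_card_ne_zero (by rw [A.pointCount]; positivity)

lemma ncard_setOf_not_mem_add_knotCount (L : Fin (q + 1) → A.Line) (P : A.Point) :
    {c | ¬ A.mem P (L c)}.ncard + knotCount A L P = q + 1 := by
  rw [knotCount, ← Set.compl_ofPred, Set.ncard_compl_add_ncard, Nat.card_eq_fintype_card,
    Fintype.card_fin]

noncomputable def lineThrough (p : A.Point) (c : Fin (q + 1)) : A.Line :=
  (A.point_class p c).exists.choose

lemma parClass_lineThrough (p : A.Point) (c : Fin (q + 1)) :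
    A.parClass (A.lineThrough p c) = c :=
  (A.point_class p c).exists.choose_spec.1

lemma mem_lineThrough (p : A.Point) (c : Fin (q + 1)) : A.mem p (A.lineThrough p c) :=
  (A.point_class p c).exists.choose_spec.2

variable {A}

lemma eq_of_parClass_eq_of_mem {l m : A.Line} {p : A.Point}
    (hc : A.parClass l = A.parClass m) (hl : A.mem p l) (hm : A.mem p m) : l = m :=
  (A.point_class p (A.parClass m)).unique ⟨hc, hl⟩ ⟨rfl, hm⟩

lemma eq_of_mem_of_mem {l m : A.Line} (hlm : l ≠ m) {x y : A.Point}
    (hxl : A.mem x l) (hxm : A.mem x m) (hyl : A.mem y l) (hym : A.mem y m) : x = y :=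
  (A.meet l m fun hc => hlm (eq_of_parClass_eq_of_mem hc hxl hxm)).unique ⟨hxl, hxm⟩ ⟨hyl, hym⟩

lemma ncard_inter_biUnion_le {ι : Type*} (l : A.Line) (M : ι → A.Line) (S : Finset ι)
    (hS : ∀ i ∈ S, M i ≠ l) :
    ({p | A.mem p l} ∩ ⋃ i ∈ S, {p | A.mem p (M i)}).ncard ≤ S.card := by
  rw [Set.inter_iUnion₂]
  refine (S.set_ncard_biUnion_le _).trans <| (Finset.sum_le_card_nsmul S _ 1 fun i hi => by
    have hsub : ({p | A.mem p l} ∩ {p | A.mem p (M i)}).Subsingleton :=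
      fun x hx y hy => eq_of_mem_of_mem (hS i hi).symm hx.1 hx.2 hy.1 hy.2
    exact (Set.ncard_le_one hsub.finite).2 fun x hx y hy => hsub hx hy).trans_eq (by simp)

variable (A) in
lemma pairwiseDisjoint_lineThrough_diff_singleton (P : A.Point) (s : Set (Fin (q + 1))) :
    s.PairwiseDisjoint fun c => {p | A.mem p (A.lineThrough P c)} \ {P} := by
  intro c _ c' _ hcc'
  refine Set.disjoint_left.2 fun p ⟨hp, hpP⟩ ⟨hp', _⟩ => hpP ?_
  refine eq_of_mem_of_mem (fun h => hcc' ?_) hp hp' (A.mem_lineThrough P c)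
    (A.mem_lineThrough P c')
  rw [← A.parClass_lineThrough P c, h, A.parClass_lineThrough]

end AffinePlaneOrder

namespace IsKakeyaLines

open AffinePlaneOrder

variable {q : ℕ} {A : AffinePlaneOrder q} {L : Fin (q + 1) → A.Line}

lemma ne_and_not_mem_of_mem_lineThrough (hL : IsKakeyaLines A L) {P p : A.Point}
    {c c' : Fin (q + 1)} (hc : ¬ A.mem P (L c)) (hp : A.mem p (A.lineThrough P c)) (hpP : p ≠ P)
    (hpc' : A.mem p (L c')) : c' ≠ c ∧ ¬ A.mem P (L c') := by
  have hc'c : c' ≠ c := by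
    rintro rfl
    have h := eq_of_parClass_eq_of_mem (by rw [hL, A.parClass_lineThrough]) hpc' hp
    exact hc (h ▸ A.mem_lineThrough P c')
  refine ⟨hc'c, fun hPc' => hpP ?_⟩
  refine eq_of_mem_of_mem (fun h => hc'c ?_) hpc' hp hPc' (A.mem_lineThrough P c)
  rw [← hL c', h, A.parClass_lineThrough]

lemma sub_card_le_ncard_lineThrough_diff_inter_compl_kakeyaSet (hL : IsKakeyaLines A L)
    {P : A.Point} {K : Finset (Fin (q + 1))} (hK : ∀ c, ¬ A.mem P (L c) → c ∈ K)
    {c : Fin (q + 1)} (hc : ¬ A.mem P (L c)) :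
    q - K.card ≤ (({p | A.mem p (A.lineThrough P c)} \ {P}) ∩ (kakeyaSet A L)ᶜ).ncard := by
  rcases eq_or_ne q 0 with rfl | hq
  · simp
  have := A.finite_point hq
  set ℓ := {p | A.mem p (A.lineThrough P c)}
  have hcovered : (ℓ \ {P}) ∩ kakeyaSet A L ⊆ ℓ ∩ ⋃ c' ∈ K.erase c, {p | A.mem p (L c')} := by
    rintro p ⟨⟨hp, hpP⟩, c', hpc'⟩
    obtain ⟨hc'c, hPc'⟩ := hL.ne_and_not_mem_of_mem_lineThrough hc hp hpP hpc'
    exact ⟨hp, Set.mem_biUnion (Finset.mem_erase.2 ⟨hc'c, hK c' hPc'⟩) hpc'⟩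
  have hcovered_card : ((ℓ \ {P}) ∩ kakeyaSet A L).ncard ≤ K.card - 1 := by
    refine (Set.ncard_le_ncard hcovered).trans ?_
    rw [← Finset.card_erase_of_mem (hK c hc)]
    refine ncard_inter_biUnion_le _ L _ fun c' hc' h => Finset.ne_of_mem_erase hc' ?_
    rw [← hL c', h, A.parClass_lineThrough]
  have hline : (ℓ \ {P}).ncard = q - 1 := by
    rw [Set.ncard_sdiff_singleton_of_mem (show P ∈ ℓ from A.mem_lineThrough P c), A.lineSize]
  have hsplit := Set.ncard_inter_add_ncard_sdiff_eq_ncard (ℓ \ {P}) (kakeyaSet A L)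
  have hKpos := Finset.card_pos.2 ⟨c, hK c hc⟩
  rw [← Set.sdiff_eq]
  omega

end IsKakeyaLines

theorem uncovered_lower_bound_general {q : ℕ} (A : AffinePlaneOrder q) (L : Fin (q + 1) → A.Line)
    (hL : IsKakeyaLines A L) (k : ℕ) (P : A.Point)
    (hP : knotCount A L P = q + 1 - k) :
    k * (q - k) ≤ {p : A.Point | ∀ c, ¬ A.mem p (L c)}.ncard := by
  rcases le_or_gt q k with hqk | hkq
  · simp [Nat.sub_eq_zero_of_le hqk]
  classical
  have := A.finite_point (by omega)
  set K := Finset.univ.filter fun c => ¬ A.mem P (L c)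
  have hK : K.card = k := by
    have hKset : {c | ¬ A.mem P (L c)} = ↑K := by
      ext
      simp [K]
    have := A.ncard_setOf_not_mem_add_knotCount L P
    rw [hKset, Set.ncard_coe_finset] at this
    omega
  have hU : {p : A.Point | ∀ c, ¬ A.mem p (L c)} = (kakeyaSet A L)ᶜ := by
    ext
    simp [kakeyaSet]
  calc k * (q - k) = ∑ _c ∈ K, (q - K.card) := by simp [hK]
    _ ≤ ∑ c ∈ K, (({p | A.mem p (A.lineThrough P c)} \ {P}) ∩ (kakeyaSet A L)ᶜ).ncard :=
      Finset.sum_le_sum fun c hc =>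
        hL.sub_card_le_ncard_lineThrough_diff_inter_compl_kakeyaSet
          (fun c' h => by simpa [K] using h) (by simpa [K] using hc)
    _ ≤ _ := hU ▸ K.sum_ncard_inter_le_ncard
      (A.pairwiseDisjoint_lineThrough_diff_singleton P _) (Set.toFinite _)

/-- If some point is a `(q+1-k)`-knot of a Kakeya line set, then at least `k(q-k)` points
are not covered by any line of the set. -/
theorem uncovered_lower_bound {q : ℕ} (A : AffinePlaneOrder q) (L : Fin (q + 1) → A.Line)
    (hL : IsKakeyaLines A L) (k : ℕ) (hk : k ≤ q) (P : A.Point)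
    (hP : knotCount A L P = q + 1 - k) :
    k * (q - k) ≤ {p : A.Point | ∀ c, ¬ A.mem p (L c)}.ncard :=
  uncovered_lower_bound_general A L hL k P hP
end

section
/- Let 𝒦 be a Kakeya set in an affine plane of order q ≥ 4 with |𝒦| > q² - ((q+1)√(q+1/4) - (3q+1)/2). Then 𝒦 contains a (q+1-k)-knot for some integer k with 0 ≤ k < √(q+1/4) - 1/2, and |𝒦| ∈ [q² - kq + k(k+1)/2, q² - kq + k²]. -/
/-!
Let `P` be a point on the largest number `m = q + 1 - k` of lines of `L`, and write `J p` for
the number of lines through `p`. Counting incidences and ordered pairs of lines (two lines of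
`L` meet exactly once) gives `∑ J = ∑ J (J - 1) = q (q + 1)`. As `J ≤ m`, this yields
`q (q + 1) ≤ m (q (q + 1) - |𝒦|)`; as `2 (J - 1) ≤ J (J - 1)` away from `P`, it yields
`|𝒦| ≥ q² - kq + k(k+1)/2`. Geometrically, the `m` lines through `P` cover at most
`1 + m (q - 1)` points and each of the other `k` lines meets them in `m` distinct points, so
`|𝒦| ≤ q² - kq + k²`.

With `s = √(q + 1/4) - 1/2`, i.e. `q = s² + s`, the hypothesis reads `|𝒦| > q² - s³`.
If `k ≥ s`, the geometric bound excludes `k ≤ q - s` (there `k (q - k) ≥ s (q - s) = s³`)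
and the counting bound excludes `k > q - s` (since `q (q + 1) = (s + 1)(q + s³)`).
-/

open Finset

theorem Finset.sum_mul_sub_one_le_mul_sum_sub_one {ι : Type*} (s : Finset ι) {f : ι → ℕ}
    {M : ℕ} (hf : ∀ i ∈ s, f i ≤ M) :
    ∑ i ∈ s, f i * (f i - 1) ≤ M * ∑ i ∈ s, (f i - 1) := by
  rw [mul_sum]
  exact sum_le_sum fun i hi => Nat.mul_le_mul_right _ (hf i hi)

theorem Finset.two_mul_sum_sub_one_add_le {ι : Type*} {s : Finset ι} (f : ι → ℕ) {i : ι}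
    (hi : i ∈ s) :
    2 * ∑ j ∈ s, (f j - 1) + f i * (f i - 1) ≤
      2 * (f i - 1) + ∑ j ∈ s, f j * (f j - 1) := by
  classical
  have h : 2 * ∑ j ∈ s.erase i, (f j - 1) ≤ ∑ j ∈ s.erase i, f j * (f j - 1) := by
    rw [mul_sum]
    refine sum_le_sum fun j _ => ?_
    obtain h | h := Nat.lt_or_ge (f j) 2
    · simp [show f j - 1 = 0 by omega]
    · exact Nat.mul_le_mul_right _ h
  rw [← add_sum_erase s _ hi, ← add_sum_erase s (fun j => f j * (f j - 1)) hi]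
  omega

namespace AffinePlaneOrder

open Classical

variable {q : ℕ} (A : AffinePlaneOrder q)

theorem card_point_pos (hq : 0 < q) : 0 < Nat.card A.Point := by
  rw [A.pointCount]; positivity

theorem nonempty_point (hq : 0 < q) : Nonempty A.Point :=
  (Nat.card_pos_iff.mp (A.card_point_pos hq)).1

noncomputable abbrev fintypePoint (hq : 0 < q) : Fintype A.Point :=
  have := (Nat.card_pos_iff.mp (A.card_point_pos hq)).2
  Fintype.ofFinite _

variable [Fintype A.Point]

noncomputable def points (l : A.Line) : Finset A.Point := {p | A.mem p l}

variable {A}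

@[simp]
theorem mem_points {p : A.Point} {l : A.Line} : p ∈ A.points l ↔ A.mem p l := by
  simp [points]

theorem card_points (l : A.Line) : #(A.points l) = q := by
  have h := A.lineSize l
  rwa [Set.ncard_eq_toFinset_card', Set.toFinset_ofPred] at h

end AffinePlaneOrder

section Kakeya

open AffinePlaneOrder Classical

variable {q : ℕ} {A : AffinePlaneOrder q} {L : Fin (q + 1) → A.Line}

theorem knotCount_eq_card (p : A.Point) : knotCount A L p = #{c | A.mem p (L c)} := by
  rw [knotCount, Set.ncard_eq_toFinset_card', Set.toFinset_ofPred]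

theorem knotCount_le (p : A.Point) : knotCount A L p ≤ q + 1 :=
  (Set.ncard_le_card _).trans (Nat.card_fin _).le

theorem mem_kakeyaSet_iff {p : A.Point} : p ∈ kakeyaSet A L ↔ 0 < knotCount A L p :=
  (Set.ncard_pos (Set.toFinite _)).symm

theorem IsKakeyaLines.eq_of_mem_of_mem (hL : IsKakeyaLines A L) {c d : Fin (q + 1)} (hcd : c ≠ d)
    {x y : A.Point} (hxc : A.mem x (L c)) (hxd : A.mem x (L d)) (hyc : A.mem y (L c))
    (hyd : A.mem y (L d)) : x = y := by
  obtain ⟨z, -, hz⟩ := A.meet (L c) (L d) (by rwa [hL c, hL d])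
  rw [hz x ⟨hxc, hxd⟩, hz y ⟨hyc, hyd⟩]

variable [Fintype A.Point]

theorem ncard_kakeyaSet_eq : (kakeyaSet A L).ncard = #{p | 0 < knotCount A L p} := by
  rw [Set.ncard_eq_toFinset_card']
  congr 1
  ext p
  simp [mem_kakeyaSet_iff]

theorem IsKakeyaLines.card_points_inter_points (hL : IsKakeyaLines A L) {c d : Fin (q + 1)}
    (hcd : c ≠ d) : #(A.points (L c) ∩ A.points (L d)) = 1 := by
  obtain ⟨x, hx, -⟩ := A.meet (L c) (L d) (by rwa [hL c, hL d])
  refine card_eq_one.mpr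
    ⟨x, eq_singleton_iff_unique_mem.mpr ⟨by simpa using hx, fun y hy => ?_⟩⟩
  rw [mem_inter, mem_points, mem_points] at hy
  exact hL.eq_of_mem_of_mem hcd hy.1 hy.2 hx.1 hx.2

theorem sum_knotCount : ∑ p, knotCount A L p = (q + 1) * q := by
  calc ∑ p, knotCount A L p = ∑ p, #{c | A.mem p (L c)} := by simp_rw [knotCount_eq_card]
    _ = ∑ c, #(A.points (L c)) := sum_card_bipartiteAbove_eq_sum_card_bipartiteBelow _
    _ = (q + 1) * q := by simp [card_points]

theorem IsKakeyaLines.sum_knotCount_mul_sub_one (hL : IsKakeyaLines A L) :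
    ∑ p, knotCount A L p * (knotCount A L p - 1) = (q + 1) * q := by
  have hoff (p : A.Point) : knotCount A L p * (knotCount A L p - 1) =
      #{cd ∈ (univ : Finset (Fin (q + 1))).offDiag | A.mem p (L cd.1) ∧ A.mem p (L cd.2)} := by
    rw [knotCount_eq_card, Nat.mul_sub_one, ← offDiag_card]
    congr 1
    ext cd
    simp only [mem_offDiag, mem_filter, mem_univ, true_and]
    tauto
  calc ∑ p, knotCount A L p * (knotCount A L p - 1)
      = ∑ cd ∈ (univ : Finset (Fin (q + 1))).offDiag,
          #(A.points (L cd.1) ∩ A.points (L cd.2)) := by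
        simp_rw [hoff, points, ← filter_and]
        exact sum_card_bipartiteAbove_eq_sum_card_bipartiteBelow _
    _ = ∑ cd ∈ (univ : Finset (Fin (q + 1))).offDiag, 1 :=
        sum_congr rfl fun cd hcd => hL.card_points_inter_points (mem_offDiag.mp hcd).2.2
    _ = (q + 1) * q := by simp [offDiag_card, ← Nat.mul_sub_one]

theorem ncard_kakeyaSet_add_sum_knotCount_sub_one :
    (kakeyaSet A L).ncard + ∑ p, (knotCount A L p - 1) = (q + 1) * q := by
  rw [← sum_knotCount (L := L), ncard_kakeyaSet_eq, card_filter, ← sum_add_distrib]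
  refine sum_congr rfl fun p _ => ?_
  split_ifs <;> omega

noncomputable def pencilPoints (A : AffinePlaneOrder q) (L : Fin (q + 1) → A.Line)
    [Fintype A.Point] (P : A.Point) : Finset A.Point :=
  ({c | A.mem P (L c)} : Finset (Fin (q + 1))).biUnion fun c => A.points (L c)

theorem card_pencilPoints_le (P : A.Point) :
    #(pencilPoints A L P) ≤ 1 + knotCount A L P * (q - 1) := by
  set T : Finset (Fin (q + 1)) := {c | A.mem P (L c)}
  have hsub : pencilPoints A L P ⊆ insert P (T.biUnion fun c => A.points (L c) \ {P}) := by
    intro x hx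
    obtain ⟨c, hc, hxc⟩ := mem_biUnion.mp hx
    by_cases hxP : x = P
    · exact hxP ▸ mem_insert_self _ _
    · exact mem_insert_of_mem
        (mem_biUnion.mpr ⟨c, hc, mem_sdiff.mpr ⟨hxc, by simpa using hxP⟩⟩)
  calc #(pencilPoints A L P) ≤ 1 + ∑ c ∈ T, #(A.points (L c) \ {P}) := by
        grw [card_le_card hsub, card_insert_le, card_biUnion_le, add_comm]
    _ = 1 + knotCount A L P * (q - 1) := by
      rw [knotCount_eq_card, ← smul_eq_mul, ← sum_const]
      congr 1
      refine sum_congr rfl fun c hc => ?_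
      rw [card_sdiff_of_subset (by simpa [T] using hc), card_points, card_singleton]

theorem IsKakeyaLines.card_points_inter_pencilPoints (hL : IsKakeyaLines A L) {P : A.Point}
    {c : Fin (q + 1)} (hc : ¬ A.mem P (L c)) :
    #(A.points (L c) ∩ pencilPoints A L P) = knotCount A L P := by
  rw [pencilPoints, inter_biUnion, card_biUnion, knotCount_eq_card, card_eq_sum_ones]
  · refine sum_congr rfl fun d hd => ?_
    have hcd : c ≠ d := by rintro rfl; exact hc (by simpa using hd)
    exact hL.card_points_inter_points hcd
  · intro d hd e he hde
    simp only [Function.onFun, disjoint_left, mem_inter, mem_points]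
    rintro x ⟨hxc, hxd⟩ ⟨-, hxe⟩
    have hPd : A.mem P (L d) := by simpa using hd
    have hPe : A.mem P (L e) := by simpa using he
    exact hc (hL.eq_of_mem_of_mem hde hxd hxe hPd hPe ▸ hxc)

theorem IsKakeyaLines.ncard_kakeyaSet_le_of_knotCount (hL : IsKakeyaLines A L) (P : A.Point) :
    (kakeyaSet A L).ncard ≤
      1 + knotCount A L P * (q - 1) + (q + 1 - knotCount A L P) * (q - knotCount A L P) := by
  set T : Finset (Fin (q + 1)) := {c | A.mem P (L c)}
  set U := pencilPoints A L P
  have hsub : kakeyaSet A L ⊆ ↑(U ∪ Tᶜ.biUnion fun c => A.points (L c) \ U) := by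
    rintro x ⟨c, hxc⟩
    by_cases hxU : x ∈ U
    · simp [hxU]
    · have hcT : c ∉ T := fun hcT => hxU (mem_biUnion.mpr ⟨c, hcT, by simpa using hxc⟩)
      simp only [coe_union, Set.mem_union, mem_coe, hxU, false_or, mem_biUnion]
      exact ⟨c, mem_compl.mpr hcT, by simpa [hxU] using hxc⟩
  calc (kakeyaSet A L).ncard
      ≤ #U + #(Tᶜ.biUnion fun c => A.points (L c) \ U) :=
        (Set.ncard_le_ncard hsub).trans ((Set.ncard_coe_finset _).trans_le (card_union_le _ _))
    _ ≤ 1 + knotCount A L P * (q - 1) + ∑ _c ∈ Tᶜ, (q - knotCount A L P) := by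
      gcongr
      · exact card_pencilPoints_le P
      refine card_biUnion_le.trans (sum_le_sum fun c hc => ?_)
      have hcP : ¬ A.mem P (L c) := by simpa [T] using hc
      rw [card_sdiff, inter_comm, hL.card_points_inter_pencilPoints hcP, card_points]
    _ = _ := by rw [sum_const, card_compl, Fintype.card_fin, ← knotCount_eq_card, smul_eq_mul]

end Kakeya

section KakeyaBounds

open AffinePlaneOrder

variable {q : ℕ} {A : AffinePlaneOrder q} {L : Fin (q + 1) → A.Line}

theorem IsKakeyaLines.ncard_kakeyaSet_le_of_knotCount_add (hL : IsKakeyaLines A L) (hq : 0 < q)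
    {P : A.Point} {k : ℕ} (hk : knotCount A L P + k = q + 1) :
    ((kakeyaSet A L).ncard : ℝ) ≤ q ^ 2 - k * q + k ^ 2 := by
  have := A.fintypePoint hq
  have h := hL.ncard_kakeyaSet_le_of_knotCount P
  rw [show q + 1 - knotCount A L P = k by omega] at h
  have hkm : ((k * (q - knotCount A L P) : ℕ) : ℝ) = k * (q - knotCount A L P) := by
    rcases Nat.eq_zero_or_pos k with rfl | hk0
    · simp
    · rw [Nat.cast_mul, Nat.cast_sub (by omega)]
  have hm : (knotCount A L P : ℝ) = q + 1 - k := by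
    rw [eq_sub_iff_add_eq]; exact_mod_cast hk
  have h' := (Nat.cast_le (α := ℝ)).mpr h
  rw [Nat.cast_add, hkm] at h'
  push_cast [Nat.cast_sub hq, hm] at h'
  linarith

theorem ncard_kakeyaSet_le_mul (hq : 0 < q) : (kakeyaSet A L).ncard ≤ (q + 1) * q := by
  have := A.fintypePoint hq
  exact Nat.le.intro ncard_kakeyaSet_add_sum_knotCount_sub_one

theorem IsKakeyaLines.mul_le_mul_sub_ncard_kakeyaSet (hL : IsKakeyaLines A L) (hq : 0 < q)
    {P : A.Point} (hP : ∀ p, knotCount A L p ≤ knotCount A L P) {k : ℕ}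
    (hk : knotCount A L P + k = q + 1) :
    ((q : ℝ) + 1) * q ≤ (q + 1 - k) * ((q + 1) * q - (kakeyaSet A L).ncard) := by
  have := A.fintypePoint hq
  have hsum := ncard_kakeyaSet_add_sum_knotCount_sub_one (A := A) (L := L)
  have hle := (univ : Finset A.Point).sum_mul_sub_one_le_mul_sum_sub_one fun p _ => hP p
  rw [hL.sum_knotCount_mul_sub_one] at hle
  set E := ∑ p, (knotCount A L p - 1)
  have hE : (E : ℝ) = (q + 1) * q - (kakeyaSet A L).ncard := by
    rw [eq_sub_iff_add_eq']; exact_mod_cast hsum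
  have hm : (knotCount A L P : ℝ) = q + 1 - k := by
    rw [eq_sub_iff_add_eq]; exact_mod_cast hk
  rw [← hm, ← hE]
  exact_mod_cast hle

theorem IsKakeyaLines.le_ncard_kakeyaSet_of_knotCount_add (hL : IsKakeyaLines A L) (hq : 0 < q)
    {P : A.Point} (hP : ∀ p, knotCount A L p ≤ knotCount A L P) {k : ℕ}
    (hk : knotCount A L P + k = q + 1) :
    (q : ℝ) ^ 2 - k * q + k * (k + 1) / 2 ≤ (kakeyaSet A L).ncard := by
  have := A.fintypePoint hq
  have hm1 : 1 ≤ knotCount A L P := by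
    by_contra! h0
    have h := sum_knotCount (A := A) (L := L)
    rw [sum_eq_zero fun p _ => by have := hP p; omega] at h
    exact absurd h.symm (by positivity)
  have hsum := ncard_kakeyaSet_add_sum_knotCount_sub_one (A := A) (L := L)
  have hineq := two_mul_sum_sub_one_add_le (knotCount A L) (mem_univ P)
  rw [hL.sum_knotCount_mul_sub_one] at hineq
  set E := ∑ p, (knotCount A L p - 1)
  have hsum' : ((kakeyaSet A L).ncard : ℝ) + E = (q + 1) * q := by exact_mod_cast hsum
  have hineq' := (Nat.cast_le (α := ℝ)).mpr hineq
  have hm : (knotCount A L P : ℝ) = q + 1 - k := by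
    rw [eq_sub_iff_add_eq]; exact_mod_cast hk
  push_cast [Nat.cast_sub hm1, hm] at hineq'
  linarith

end KakeyaBounds

theorem lt_sub_half_of_kakeya_bounds {q t k n : ℝ} (ht : t ^ 2 = q + 1 / 4) (ht0 : 0 ≤ t)
    (hupper : n ≤ q ^ 2 - k * q + k ^ 2)
    (hcount : (q + 1) * q ≤ (q + 1 - k) * ((q + 1) * q - n)) (hn : n ≤ (q + 1) * q)
    (hsize : q ^ 2 - ((q + 1) * t - (3 * q + 1) / 2) < n) :
    k < t - 1 / 2 := by
  set s := t - 1 / 2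
  have hq : q = s ^ 2 + s := by simp only [s]; linear_combination -ht
  have hs3 : (q + 1) * t - (3 * q + 1) / 2 = s ^ 3 := by
    simp only [s]; linear_combination (3 / 2 - t) * ht
  rw [hs3] at hsize
  by_contra! hks
  rcases le_or_gt k (q - s) with hk | hk
  · nlinarith [mul_nonneg (sub_nonneg.mpr hks) (sub_nonneg.mpr hk)]
  · have hX : (s + 1) * (q + s ^ 3) ≤ (s + 1) * ((q + 1) * q - n) :=
      calc (s + 1) * (q + s ^ 3) = (q + 1) * q := by rw [hq]; ring
        _ ≤ (q + 1 - k) * ((q + 1) * q - n) := hcount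
        _ ≤ (s + 1) * ((q + 1) * q - n) := by
          gcongr
          linarith
    have := le_of_mul_le_mul_left hX (by simp only [s]; linarith)
    linarith

/-- If a Kakeya set in an affine plane of order `q ≥ 4` satisfies
`|𝒦| > q² - ((q+1)√(q+1/4) - (3q+1)/2)`, then it has a `(q+1-k)`-knot for some integer
`0 ≤ k < √(q+1/4) - 1/2`, and `|𝒦| ∈ [q² - kq + k(k+1)/2, q² - kq + k²]`. -/
theorem main_corollary {q : ℕ} (hq : 4 ≤ q) (A : AffinePlaneOrder q)
    (L : Fin (q + 1) → A.Line) (hL : IsKakeyaLines A L)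
    (hsize : ((kakeyaSet A L).ncard : ℝ) >
      (q : ℝ) ^ 2 - (((q : ℝ) + 1) * Real.sqrt ((q : ℝ) + 1/4) - (3 * (q : ℝ) + 1) / 2)) :
    ∃ k : ℕ, (k : ℝ) < Real.sqrt ((q : ℝ) + 1/4) - 1/2 ∧
      (∃ P : A.Point, knotCount A L P = q + 1 - k) ∧
      (q : ℝ) ^ 2 - k * q + k * (k + 1) / 2 ≤ ((kakeyaSet A L).ncard : ℝ) ∧
      ((kakeyaSet A L).ncard : ℝ) ≤ (q : ℝ) ^ 2 - k * q + k ^ 2 := by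
  have hq0 : 0 < q := by omega
  have := A.fintypePoint hq0
  have := A.nonempty_point hq0
  obtain ⟨P, hP⟩ := Finite.exists_max (knotCount A L)
  obtain ⟨k, hk⟩ : ∃ k, knotCount A L P + k = q + 1 :=
    ⟨_, Nat.add_sub_of_le (knotCount_le P)⟩
  have hupper := hL.ncard_kakeyaSet_le_of_knotCount_add hq0 hk
  refine ⟨k, ?_, ⟨P, by omega⟩, hL.le_ncard_kakeyaSet_of_knotCount_add hq0 hP hk, hupper⟩
  exact lt_sub_half_of_kakeya_bounds (Real.sq_sqrt (by positivity)) (Real.sqrt_nonneg _)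
    hupper (hL.mul_le_mul_sub_ncard_kakeyaSet hq0 hP hk)
    (by exact_mod_cast ncard_kakeyaSet_le_mul hq0) hsize
end

section
/- Let q ≥ 9 be a perfect square and 𝒦 a Kakeya set in an affine plane of order q with |𝒦| > q² - q√q + q. Then 𝒦 contains a (q+1-k)-knot for some integer k with 0 ≤ k ≤ √q, and |𝒦| ∈ [q² - kq + k(k+1)/2, q² - kq + k²]. -/
open Finset

set_option maxHeartbeats 1600000 in
/-- Structural facts about a Kakeya set in an affine plane of order `q`: with `N` the maximal
knot multiplicity and `k = q + 1 - N`, the size of the Kakeya set is between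
`1 + N(q-1) + k(k-1)/2` and `1 + N(q-1) + k(k-1)`, and the incidence double counts hold. -/
private lemma kakeya_aux (q : ℕ) (hq1 : 1 ≤ q) (A : AffinePlaneOrder q)
    (L : Fin (q + 1) → A.Line) (hL : IsKakeyaLines A L) :
    ∃ N k T t1 : ℕ, N + k = q + 1 ∧ 1 ≤ N ∧
      (∃ P : A.Point, knotCount A L P = N) ∧
      2 * t1 = k * (k - 1) ∧
      1 + N * (q - 1) + t1 ≤ (kakeyaSet A L).ncard ∧
      (kakeyaSet A L).ncard ≤ 1 + N * (q - 1) + k * (k - 1) ∧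
      (kakeyaSet A L).ncard + T = (q + 1) * q ∧
      (q + 1) * q ≤ N * T := by
  classical
  have hfin : Finite A.Point := Nat.finite_of_card_ne_zero
    (by rw [A.pointCount]; positivity)
  haveI : Fintype A.Point := Fintype.ofFinite _
  -- finset versions of the basic objects
  set pts : Fin (q + 1) → Finset A.Point :=
    fun c => univ.filter (fun p => A.mem p (L c)) with hpts
  have hmem_pts : ∀ (p : A.Point) (c : Fin (q + 1)), p ∈ pts c ↔ A.mem p (L c) := by
    intro p c; simp [hpts]
  have hpts_card : ∀ c, (pts c).card = q := by
    intro c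
    have h := A.lineSize (L c)
    rw [show {p : A.Point | A.mem p (L c)} = (↑(pts c) : Set A.Point) by
      ext p; simp [hmem_pts]] at h
    rwa [Set.ncard_coe_finset] at h
  set K : Finset A.Point := univ.filter (fun p => ∃ c, A.mem p (L c)) with hK
  have hKcard : (kakeyaSet A L).ncard = K.card := by
    rw [show kakeyaSet A L = (↑K : Set A.Point) by ext p; simp [kakeyaSet, hK]]
    exact Set.ncard_coe_finset _
  set kc : A.Point → ℕ := fun p => (univ.filter (fun c => A.mem p (L c))).card with hkc
  have hkc_eq : ∀ p, knotCount A L p = kc p := by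
    intro p
    rw [knotCount, show {c : Fin (q + 1) | A.mem p (L c)} =
      (↑(univ.filter (fun c => A.mem p (L c))) : Set (Fin (q + 1))) by ext c; simp]
    rw [Set.ncard_coe_finset, hkc]
  -- two distinct chosen lines meet in exactly one point
  have hmeet : ∀ c c' : Fin (q + 1), c ≠ c' → ∃! x, x ∈ pts c ∧ x ∈ pts c' := by
    intro c c' h
    have h2 := A.meet (L c) (L c') (by rw [hL c, hL c']; exact h)
    simpa only [hmem_pts] using h2
  have hinter : ∀ c c' : Fin (q + 1), c ≠ c' → (pts c ∩ pts c').card = 1 := by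
    intro c c' h
    obtain ⟨x, hx, hu⟩ := hmeet c c' h
    rw [Finset.card_eq_one]
    refine ⟨x, ?_⟩
    ext y
    simp only [Finset.mem_inter, Finset.mem_singleton]
    constructor
    · intro hy; exact hu y hy
    · rintro rfl; exact hx
  -- double counting: incidences
  have hsum1 : ∑ p : A.Point, kc p = (q + 1) * q := by
    calc ∑ p : A.Point, kc p
        = ∑ p : A.Point, ∑ c : Fin (q + 1), if A.mem p (L c) then 1 else 0 := by
          refine Finset.sum_congr rfl fun p _ => ?_
          simp only [hkc]; exact Finset.card_filter _ _
      _ = ∑ c : Fin (q + 1), ∑ p : A.Point, if A.mem p (L c) then 1 else 0 :=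
          Finset.sum_comm
      _ = ∑ c : Fin (q + 1), (pts c).card := by
          refine Finset.sum_congr rfl fun c _ => ?_
          simp only [hpts]; exact (Finset.card_filter _ _).symm
      _ = (q + 1) * q := by
          rw [Finset.sum_congr rfl fun c _ => hpts_card c]
          simp [Finset.sum_const, Finset.card_univ, mul_comm]
  have hmul_pred : ∀ n : ℕ, n * (n - 1) = n * n - n := by
    intro n
    rcases n with _ | j
    · simp
    · rw [show j + 1 - 1 = j from rfl,
        show (j + 1) * (j + 1) = (j + 1) * j + (j + 1) by ring, Nat.add_sub_cancel]
  -- double counting: pairs of lines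
  have hsum2 : ∑ p : A.Point, kc p * (kc p - 1) = (q + 1) * q := by
    have hoff : ∀ p : A.Point, kc p * (kc p - 1) =
        ((univ.offDiag).filter
          (fun cc : Fin (q + 1) × Fin (q + 1) => A.mem p (L cc.1) ∧ A.mem p (L cc.2))).card := by
      intro p
      have h2 : (univ.filter (fun c => A.mem p (L c))).offDiag =
          (univ.offDiag).filter
            (fun cc : Fin (q + 1) × Fin (q + 1) => A.mem p (L cc.1) ∧ A.mem p (L cc.2)) := by
        ext ⟨c, c'⟩
        simp only [Finset.mem_offDiag, Finset.mem_filter, Finset.mem_univ, true_and]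
        tauto
      rw [← h2, Finset.offDiag_card]
      simp only [hkc]
      rw [hmul_pred]
    calc ∑ p : A.Point, kc p * (kc p - 1)
        = ∑ p : A.Point, ∑ cc ∈ (univ : Finset (Fin (q + 1))).offDiag,
            (if A.mem p (L cc.1) ∧ A.mem p (L cc.2) then 1 else 0) := by
          refine Finset.sum_congr rfl fun p _ => ?_
          rw [hoff p]; exact Finset.card_filter _ _
      _ = ∑ cc ∈ (univ : Finset (Fin (q + 1))).offDiag, ∑ p : A.Point,
            (if A.mem p (L cc.1) ∧ A.mem p (L cc.2) then 1 else 0) := Finset.sum_comm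
      _ = ∑ cc ∈ (univ : Finset (Fin (q + 1))).offDiag, 1 := by
          refine Finset.sum_congr rfl fun cc hcc => ?_
          have hne : cc.1 ≠ cc.2 := (Finset.mem_offDiag.mp hcc).2.2
          rw [← Finset.card_filter]
          rw [show univ.filter (fun p => A.mem p (L cc.1) ∧ A.mem p (L cc.2)) =
            pts cc.1 ∩ pts cc.2 by ext x; simp [hpts]]
          exact hinter cc.1 cc.2 hne
      _ = (q + 1) * q := by
          rw [Finset.sum_const, Finset.offDiag_card, Finset.card_univ, Fintype.card_fin,
            smul_eq_mul, mul_one, show (q + 1) * (q + 1) = (q + 1) * q + (q + 1) by ring,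
            Nat.add_sub_cancel]
  have hkc_zero : ∀ p ∉ K, kc p = 0 := by
    intro p hp
    simp only [hkc, Finset.card_eq_zero, Finset.filter_eq_empty_iff]
    intro c _
    rw [hK] at hp
    simp only [Finset.mem_filter, Finset.mem_univ, true_and] at hp
    exact fun h => hp ⟨c, h⟩
  have hsum1K : ∑ p ∈ K, kc p = (q + 1) * q := by
    rw [← hsum1]
    exact Finset.sum_subset (Finset.subset_univ K) (fun p _ hp => hkc_zero p hp)
  have hsum2K : ∑ p ∈ K, kc p * (kc p - 1) = (q + 1) * q := by
    rw [← hsum2]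
    exact Finset.sum_subset (Finset.subset_univ K)
      (fun p _ hp => by rw [hkc_zero p hp]; ring)
  have hkc_pos : ∀ p ∈ K, 1 ≤ kc p := by
    intro p hp
    rw [hK] at hp
    simp only [Finset.mem_filter, Finset.mem_univ, true_and] at hp
    obtain ⟨c, hc⟩ := hp
    simp only [hkc]
    exact Finset.card_pos.mpr ⟨c, by simp [hc]⟩
  -- K is nonempty since lines are nonempty
  have hKne : K.Nonempty := by
    have h0 : (pts 0).Nonempty := Finset.card_pos.mp (by rw [hpts_card]; omega)
    obtain ⟨x, hx⟩ := h0
    refine ⟨x, ?_⟩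
    rw [hK]
    simp only [Finset.mem_filter, Finset.mem_univ, true_and]
    exact ⟨0, (hmem_pts x 0).mp hx⟩
  -- the point with maximal knot count
  obtain ⟨P, hPK, hPmax⟩ := Finset.exists_max_image K kc hKne
  have hmaxall : ∀ p, kc p ≤ kc P := by
    intro p
    by_cases hp : p ∈ K
    · exact hPmax p hp
    · rw [hkc_zero p hp]; exact Nat.zero_le _
  set N := kc P with hN
  have hN1 : 1 ≤ N := hkc_pos P hPK
  set S : Finset (Fin (q + 1)) := univ.filter (fun c => A.mem P (L c)) with hS
  have hScard : S.card = N := by rw [hS, hN, hkc]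
  have hNq : N ≤ q + 1 := by
    rw [← hScard]
    simpa using Finset.card_le_card (Finset.subset_univ S)
  obtain ⟨k, hNk⟩ : ∃ k, N + k = q + 1 := ⟨q + 1 - N, by omega⟩
  have hPin : ∀ c ∈ S, P ∈ pts c := by
    intro c hc
    rw [hS] at hc
    simp only [Finset.mem_filter, Finset.mem_univ, true_and] at hc
    exact (hmem_pts P c).mpr hc
  have hnotS : ∀ c, c ∉ S → P ∉ pts c := by
    intro c hc hmem
    exact hc (by rw [hS]; simp [(hmem_pts P c).mp hmem])
  have hatP : ∀ c c' x, c ≠ c' → c ∈ S → c' ∈ S → x ∈ pts c → x ∈ pts c' → x = P := by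
    intro c c' x h hc hc' hxc hxc'
    obtain ⟨y, _, hu⟩ := hmeet c c' h
    rw [hu x ⟨hxc, hxc'⟩, hu P ⟨hPin c hc, hPin c' hc'⟩]
  set cov : Finset A.Point := S.biUnion pts with hcov
  have hSne : S.Nonempty := Finset.card_pos.mp (by rw [hScard]; omega)
  have hcov_card : cov.card = 1 + N * (q - 1) := by
    have hcov_eq : cov = insert P (S.biUnion (fun c => pts c \ {P})) := by
      ext x
      simp only [hcov, Finset.mem_biUnion, Finset.mem_insert, Finset.mem_sdiff,
        Finset.mem_singleton]
      constructor
      · rintro ⟨c, hc, hx⟩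
        by_cases hxP : x = P
        · exact Or.inl hxP
        · exact Or.inr ⟨c, hc, hx, hxP⟩
      · rintro (rfl | ⟨c, hc, hx, _⟩)
        · obtain ⟨c, hc⟩ := hSne; exact ⟨c, hc, hPin c hc⟩
        · exact ⟨c, hc, hx⟩
    have hdisj : ∀ c ∈ S, ∀ c' ∈ S, c ≠ c' →
        Disjoint (pts c \ {P}) (pts c' \ {P}) := by
      intro c hc c' hc' hne
      rw [Finset.disjoint_left]
      intro x hx hx'
      simp only [Finset.mem_sdiff, Finset.mem_singleton] at hx hx'
      exact hx.2 (hatP c c' x hne hc hc' hx.1 hx'.1)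
    rw [hcov_eq, Finset.card_insert_of_notMem (by simp), Finset.card_biUnion hdisj]
    have hone : ∀ c ∈ S, (pts c \ {P}).card = q - 1 := by
      intro c hc
      rw [Finset.card_sdiff_of_subset (Finset.singleton_subset_iff.mpr (hPin c hc)),
        Finset.card_singleton, hpts_card]
    rw [Finset.sum_congr rfl hone, Finset.sum_const, hScard, smul_eq_mul]
    omega
  -- an outside line meets the covered part in exactly N points
  have hcap_card : ∀ c, c ∉ S → (pts c ∩ cov).card = N := by
    intro c hc
    have hfex : ∀ c' ∈ S, c' ≠ c := fun c' hc' e => hc (e ▸ hc')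
    set f : Fin (q + 1) → A.Point := fun c' =>
      if h : c' ≠ c then (hmeet c' c h).choose else P with hf
    have hfmem : ∀ c' (h : c' ≠ c), f c' ∈ pts c' ∧ f c' ∈ pts c := by
      intro c' h
      simp only [hf, dif_pos h]
      exact (hmeet c' c h).choose_spec.1
    have hfuniq : ∀ c' (h : c' ≠ c) x, x ∈ pts c' → x ∈ pts c → x = f c' := by
      intro c' h x hx1 hx2
      have h2 := (hmeet c' c h).choose_spec.2
      simp only [hf, dif_pos h]
      exact h2 x ⟨hx1, hx2⟩
    have himg : pts c ∩ cov = S.image f := by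
      ext x
      simp only [Finset.mem_inter, Finset.mem_image, hcov, Finset.mem_biUnion]
      constructor
      · rintro ⟨hxc, c', hc', hx'⟩
        exact ⟨c', hc', (hfuniq c' (hfex c' hc') x hx' hxc).symm⟩
      · rintro ⟨c', hc', rfl⟩
        have h := hfmem c' (hfex c' hc')
        exact ⟨h.2, c', hc', h.1⟩
    rw [himg, Finset.card_image_of_injOn, hScard]
    intro c1 h1 c2 h2 he
    simp only [Finset.mem_coe] at h1 h2
    by_contra hne
    have hx1 := hfmem c1 (hfex c1 h1)
    have hx2 := hfmem c2 (hfex c2 h2)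
    have hP : f c1 = P := hatP c1 c2 (f c1) hne h1 h2 hx1.1 (he ▸ hx2.1)
    exact hnotS c hc (hP ▸ hx1.2)
  have hdiff_card : ∀ c, c ∉ S → (pts c \ cov).card = q - N := by
    intro c hc
    have h2 := Finset.card_sdiff_add_card_inter (pts c) cov
    rw [hcap_card c hc, hpts_card] at h2
    omega
  -- K is the union of cov and the outside lines
  have hKunion : cov ∪ (univ \ S).biUnion pts = K := by
    ext x
    simp only [Finset.mem_union, hcov, Finset.mem_biUnion, Finset.mem_sdiff,
      Finset.mem_univ, true_and, hK, Finset.mem_filter, hmem_pts]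
    constructor
    · rintro (⟨c, _, hx⟩ | ⟨c, _, hx⟩) <;> exact ⟨c, hx⟩
    · rintro ⟨c, hx⟩
      by_cases hcS : c ∈ S
      · exact Or.inl ⟨c, hcS, hx⟩
      · exact Or.inr ⟨c, hcS, hx⟩
  have hcardUS : (univ \ S).card = k := by
    rw [Finset.card_univ_diff, hScard, Fintype.card_fin]
    omega
  -- upper bound
  have hsplit2 : cov ∪ (univ \ S).biUnion (fun c => pts c \ cov) = K := by
    rw [← hKunion]
    ext x
    simp only [Finset.mem_union, Finset.mem_biUnion, Finset.mem_sdiff]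
    constructor
    · rintro (h | ⟨c, hc, hx, _⟩)
      · exact Or.inl h
      · exact Or.inr ⟨c, hc, hx⟩
    · rintro (h | ⟨c, hc, hx⟩)
      · exact Or.inl h
      · by_cases hxcov : x ∈ cov
        · exact Or.inl hxcov
        · exact Or.inr ⟨c, hc, hx, hxcov⟩
  have hup0 : K.card ≤ 1 + N * (q - 1) + k * (q - N) := by
    calc K.card = (cov ∪ (univ \ S).biUnion (fun c => pts c \ cov)).card := by rw [hsplit2]
      _ ≤ cov.card + ((univ \ S).biUnion (fun c => pts c \ cov)).card :=
          Finset.card_union_le _ _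
      _ ≤ cov.card + ∑ c ∈ univ \ S, (pts c \ cov).card :=
          Nat.add_le_add_left Finset.card_biUnion_le _
      _ = cov.card + ∑ c ∈ univ \ S, (q - N) := by
          rw [Finset.sum_congr rfl (fun c hc => hdiff_card c (Finset.mem_sdiff.mp hc).2)]
      _ = 1 + N * (q - 1) + k * (q - N) := by
          rw [Finset.sum_const, hcardUS, smul_eq_mul, hcov_card]
  have hup' : K.card ≤ 1 + N * (q - 1) + k * (k - 1) := by
    rcases Nat.eq_zero_or_pos k with h0 | h0
    · simpa [h0] using hup0
    · have he : q - N = k - 1 := by omega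
      rw [he] at hup0; exact hup0
  -- lower bound, by induction on outside lines
  have hstep : ∀ (c : Fin (q + 1)) (T : Finset (Fin (q + 1))), c ∉ S → c ∉ T →
      (cov ∪ T.biUnion pts).card + (q - N - T.card) ≤
        (cov ∪ (insert c T).biUnion pts).card := by
    intro c T hcS hcT
    set X := cov ∪ T.biUnion pts with hX
    have hXcap : (pts c ∩ X).card ≤ N + T.card := by
      have hsub : pts c ∩ X ⊆ (pts c ∩ cov) ∪ T.biUnion (fun c' => pts c ∩ pts c') := by
        intro x hx
        simp only [hX, Finset.mem_inter, Finset.mem_union, Finset.mem_biUnion] at hx ⊢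
        tauto
      calc (pts c ∩ X).card
          ≤ ((pts c ∩ cov) ∪ T.biUnion (fun c' => pts c ∩ pts c')).card :=
            Finset.card_le_card hsub
        _ ≤ (pts c ∩ cov).card + (T.biUnion (fun c' => pts c ∩ pts c')).card :=
            Finset.card_union_le _ _
        _ ≤ N + ∑ c' ∈ T, (pts c ∩ pts c').card :=
            Nat.add_le_add (le_of_eq (hcap_card c hcS)) Finset.card_biUnion_le
        _ ≤ N + ∑ c' ∈ T, 1 := by
            refine Nat.add_le_add_left (Finset.sum_le_sum fun c' hc' => ?_) N
            exact le_of_eq (hinter c c' (fun e => hcT (e ▸ hc')))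
        _ = N + T.card := by rw [Finset.sum_const, smul_eq_mul, mul_one]
    have h3 : (pts c \ X).card + (pts c ∩ X).card = q := by
      rw [Finset.card_sdiff_add_card_inter, hpts_card]
    have h4 : cov ∪ (insert c T).biUnion pts = X ∪ pts c := by
      rw [hX]
      ext x
      simp only [Finset.mem_union, Finset.mem_biUnion, Finset.mem_insert]
      constructor
      · rintro (h | ⟨c', (rfl | hc'), hx⟩)
        · tauto
        · tauto
        · exact Or.inl (Or.inr ⟨c', hc', hx⟩)
      · rintro ((h | ⟨c', hc', hx⟩) | hx)
        · tauto
        · exact Or.inr ⟨c', Or.inr hc', hx⟩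
        · exact Or.inr ⟨c, Or.inl rfl, hx⟩
    have h5 := Finset.card_sdiff_add_card (pts c) X
    rw [h4, Finset.union_comm X (pts c)]
    omega
  have hlow_aux : ∀ T : Finset (Fin (q + 1)), (∀ c' ∈ T, c' ∉ S) →
      cov.card + ∑ i ∈ Finset.range T.card, (q - N - i) ≤ (cov ∪ T.biUnion pts).card := by
    intro T
    induction T using Finset.induction_on with
    | empty => intro _; simp
    | @insert c T hcT ih =>
      intro hsub
      have hT : ∀ c' ∈ T, c' ∉ S := fun c' h => hsub c' (Finset.mem_insert_of_mem h)
      have hc : c ∉ S := hsub c (Finset.mem_insert_self c T)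
      have h1 := ih hT
      have h2 := hstep c T hc hcT
      rw [Finset.card_insert_of_notMem hcT, Finset.sum_range_succ]
      omega
  have hlow := hlow_aux (univ \ S) (fun c' hc' => (Finset.mem_sdiff.mp hc').2)
  rw [hKunion, hcardUS, hcov_card] at hlow
  have hsum_eq : ∑ i ∈ Finset.range k, (q - N - i) = ∑ i ∈ Finset.range k, i := by
    rcases Nat.eq_zero_or_pos k with h0 | h0
    · simp [h0]
    · have hcongr : ∀ i ∈ Finset.range k, q - N - i = k - 1 - i := by
        intro i hi
        have := Finset.mem_range.mp hi
        omega
      rw [Finset.sum_congr rfl hcongr]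
      exact Finset.sum_range_reflect (fun i => i) k
  rw [hsum_eq] at hlow
  have ht1 : 2 * (∑ i ∈ Finset.range k, i) = k * (k - 1) := by
    have h2 := Finset.sum_range_id_mul_two k
    linarith [h2]
  -- the T used for the pair-count bound
  have hKsum : K.card + (∑ p ∈ K, (kc p - 1)) = (q + 1) * q := by
    rw [← hsum1K]
    have hc : ∀ p ∈ K, kc p = (kc p - 1) + 1 := fun p hp => by
      have := hkc_pos p hp; omega
    rw [Finset.sum_congr rfl hc, Finset.sum_add_distrib, Finset.sum_const,
      smul_eq_mul, mul_one]
    omega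
  have hTN : (q + 1) * q ≤ N * (∑ p ∈ K, (kc p - 1)) := by
    rw [← hsum2K, Finset.mul_sum]
    exact Finset.sum_le_sum fun p hp => Nat.mul_le_mul_right _ (hmaxall p)
  exact ⟨N, k, ∑ p ∈ K, (kc p - 1), ∑ i ∈ Finset.range k, i, hNk, hN1,
    ⟨P, by rw [hkc_eq P, hN]⟩, ht1, by rw [hKcard]; exact hlow,
    by rw [hKcard]; exact hup', by rw [hKcard]; exact hKsum, hTN⟩

set_option maxHeartbeats 1000000 in
/-- For `q = m² ≥ 9` a perfect square: a Kakeya set with `|𝒦| > q² - q√q + q` has a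
`(q+1-k)`-knot for some `0 ≤ k ≤ √q`, and `|𝒦| ∈ [q² - kq + k(k+1)/2, q² - kq + k²]`. -/
theorem square_order_corollary (m : ℕ) (hm : 3 ≤ m) (A : AffinePlaneOrder (m ^ 2))
    (L : Fin (m ^ 2 + 1) → A.Line) (hL : IsKakeyaLines A L)
    (hsize : (kakeyaSet A L).ncard > m ^ 4 - m ^ 2 * m + m ^ 2) :
    ∃ k : ℕ, k ≤ m ∧
      (∃ P : A.Point, knotCount A L P = m ^ 2 + 1 - k) ∧
      m ^ 4 - k * m ^ 2 + k * (k + 1) / 2 ≤ (kakeyaSet A L).ncard ∧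
      (kakeyaSet A L).ncard ≤ m ^ 4 - k * m ^ 2 + k ^ 2 := by
  obtain ⟨N, k, T, t1, hNk, hN1, ⟨P, hNP⟩, ht1, hlow, hup, hKT, hTN⟩ :=
    kakeya_aux (m ^ 2) (by nlinarith) A L hL
  set Kc := (kakeyaSet A L).ncard with hKcdef
  have hm2 : (1 : ℕ) ≤ m ^ 2 := by nlinarith
  have hX : 1 + N * (m ^ 2 - 1) + k * m ^ 2 = m ^ 4 + k := by
    zify [hm2]
    have hNk' : (N : ℤ) + k = (m : ℤ) ^ 2 + 1 := by exact_mod_cast hNk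
    linear_combination ((m : ℤ) ^ 2 - 1) * hNk'
  have hkk : k + k * (k - 1) = k * k := by
    rcases k with _ | j
    · simp
    · rw [show j + 1 - 1 = j from rfl]; ring
  have hA : m ^ 4 + (t1 + k) ≤ Kc + k * m ^ 2 := by linarith [hlow, hX]
  have hB : Kc + k * m ^ 2 ≤ m ^ 4 + k * k := by linarith [hup, hX, hkk]
  have hs : m ^ 4 + m ^ 2 < Kc + m ^ 3 := by
    rw [show m ^ 2 * m = m ^ 3 by ring] at hsize
    have h2 : m ^ 3 ≤ m ^ 4 := Nat.pow_le_pow_right (by omega) (by omega)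
    have h3 : m ^ 4 - m ^ 3 + m ^ 3 = m ^ 4 := Nat.sub_add_cancel h2
    linarith [hsize]
  by_cases hkm : k ≤ m
  · have hkq : k * m ^ 2 ≤ m ^ 4 := by nlinarith
    have hkk2 : k * (k - 1) + 2 * k = k * (k + 1) := by
      rcases k with _ | j
      · simp
      · rw [show j + 1 - 1 = j from rfl]; ring
    have h2t2 : k * (k + 1) = 2 * (t1 + k) := by linarith [ht1, hkk2]
    have ht2div : k * (k + 1) / 2 = t1 + k := by
      rw [h2t2, Nat.mul_div_cancel_left _ (by norm_num)]
    refine ⟨k, hkm, ⟨P, ?_⟩, ?_, ?_⟩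
    · rw [hNP]
      exact Nat.eq_sub_of_add_eq hNk
    · rw [ht2div, ← Nat.sub_add_comm hkq]
      exact Nat.sub_le_iff_le_add.mpr hA
    · rw [show k ^ 2 = k * k by ring, ← Nat.sub_add_comm hkq]
      exact (le_tsub_iff_right (le_trans hkq (Nat.le_add_right _ _))).mpr hB
  · exfalso
    have hmk : m + 1 ≤ k := by omega
    by_cases hk2 : k + m ≤ m ^ 2
    · have hkey : k * k + m ^ 3 ≤ k * m ^ 2 + m ^ 2 := by
        zify
        have h1 : (m : ℤ) + 1 ≤ k := by exact_mod_cast hmk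
        have h2 : (k : ℤ) + m ≤ (m : ℤ) ^ 2 := by exact_mod_cast hk2
        have h4 : (3 : ℤ) ≤ m := by exact_mod_cast hm
        nlinarith [mul_nonneg (by linarith : (0:ℤ) ≤ (k : ℤ) - m - 1)
          (by linarith : (0:ℤ) ≤ (m : ℤ) ^ 2 - m - (k : ℤ))]
      linarith [hB, hs, hkey]
    · have hk2' : m ^ 2 + 1 ≤ k + m := Nat.succ_le_of_lt (Nat.lt_of_not_le hk2)
      have hNm : N ≤ m := by linarith [hNk, hk2']
      have hTm : (m ^ 2 + 1) * m ^ 2 ≤ m * T :=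
        le_trans hTN (Nat.mul_le_mul_right T hNm)
      have hq1q : (m ^ 2 + 1) * m ^ 2 = m ^ 4 + m ^ 2 := by ring
      have hTgt : m ^ 3 < T := by
        have hlt : m * m ^ 3 < m * T := by
          have he : m * m ^ 3 = m ^ 4 := by ring
          have hp : 0 < m ^ 2 := by positivity
          linarith [hTm, hq1q]
        exact Nat.lt_of_mul_lt_mul_left hlt
      linarith [hs, hKT, hq1q, hTgt]
end

section
/- If a Kakeya set 𝒦 in an affine plane of order q has a (q-1)-knot and satisfies the bounds q² - 2q + 3 ≤ |𝒦| ≤ q² - 2q + 4, then in fact |𝒦| = q² - 2q + 4. -/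
namespace AffinePlaneOrder

variable {q : ℕ} (A : AffinePlaneOrder q)

/-- Two lines of the same class with a common point are equal. -/
lemma line_eq {l m : A.Line} {x : A.Point}
    (h : A.parClass l = A.parClass m) (hx : A.mem x l) (hy : A.mem x m) : l = m := by
  obtain ⟨n, -, hu⟩ := A.point_class x (A.parClass m)
  rw [hu l ⟨h, hx⟩, hu m ⟨rfl, hy⟩]

/-- The plane has finitely many points (when `q ≥ 1`). -/
lemma finitePoint (hq : 1 ≤ q) : Finite A.Point := by
  refine Nat.finite_of_card_ne_zero ?_
  rw [A.pointCount]
  positivity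

/-- Join: any point distinct from `P` lies on a common line with `P`.  Here `f c` is
the line of class `c` through `P`. -/
lemma join (hq : 1 ≤ q) {P : A.Point} {f : Fin (q + 1) → A.Line}
    (hf : ∀ c, A.parClass (f c) = c ∧ A.mem P (f c)) {x : A.Point} (hx : x ≠ P) :
    ∃ c, A.mem x (f c) := by
  have : Finite A.Point := A.finitePoint hq
  by_cases h0 : A.mem x (f 0)
  · exact ⟨0, h0⟩
  -- lines through x
  choose g hg using fun c => (A.point_class x c).exists
  -- every line through x of nonzero class meets `f 0`
  have hmeet : ∀ c : {c : Fin (q + 1) // c ≠ 0}, ∃ y : {p : A.Point // A.mem p (f 0)},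
      A.mem (y : A.Point) (g c) := by
    rintro ⟨c, hc⟩
    have hne : A.parClass (g c) ≠ A.parClass (f 0) := by
      rw [(hg c).1, (hf 0).1]; exact hc
    obtain ⟨y, ⟨hy1, hy2⟩, -⟩ := A.meet _ _ hne
    exact ⟨⟨y, hy2⟩, hy1⟩
  choose φ hφ using hmeet
  have hinj : Function.Injective φ := by
    rintro ⟨c, hc⟩ ⟨c', hc'⟩ hcc
    simp only [Subtype.mk.injEq]
    by_contra hne
    have hpar : A.parClass (g c) ≠ A.parClass (g c') := by
      rw [(hg c).1, (hg c').1]; exact hne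
    obtain ⟨z, -, hz⟩ := A.meet _ _ hpar
    have h1 : ((φ ⟨c, hc⟩ : {p : A.Point // A.mem p (f 0)}) : A.Point) = z :=
      hz _ ⟨hφ ⟨c, hc⟩, by rw [hcc]; exact hφ ⟨c', hc'⟩⟩
    have h2 : x = z := hz x ⟨(hg c).2, (hg c').2⟩
    exact h0 (h2 ▸ h1 ▸ (φ ⟨c, hc⟩).2)
  have hcard : Nat.card {c : Fin (q + 1) // c ≠ 0} = Nat.card {p : A.Point // A.mem p (f 0)} := by
    have h1 : Nat.card {c : Fin (q + 1) // c ≠ 0} = q := by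
      rw [Nat.card_eq_fintype_card, Fintype.card_subtype_compl, Fintype.card_fin,
        Fintype.card_subtype_eq]
      omega
    have h2 : Nat.card {p : A.Point // A.mem p (f 0)} = q := by
      show Nat.card ↥{p : A.Point | A.mem p (f 0)} = q
      rw [Nat.card_coe_set_eq, A.lineSize]
    rw [h1, h2]
  have hbij : Function.Bijective φ :=
    (Nat.bijective_iff_injective_and_card φ).mpr ⟨hinj, hcard⟩
  obtain ⟨⟨c, hc⟩, hcP⟩ := hbij.2 ⟨P, (hf 0).2⟩
  have hPg : A.mem P (g c) := by
    have := hφ ⟨c, hc⟩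
    rwa [hcP] at this
  have : g c = f c := A.line_eq (by rw [(hg c).1, (hf c).1]) hPg (hf c).2
  exact ⟨c, this ▸ (hg c).2⟩

end AffinePlaneOrder

/-- If a Kakeya set has a `(q-1)`-knot (and no larger knot) and its size lies in
`[q² - 2q + 3, q² - 2q + 4]`, then its size is exactly `q² - 2q + 4`. -/
theorem size_with_q_sub_one_knot {q : ℕ} (hq : 3 ≤ q) (A : AffinePlaneOrder q)
    (L : Fin (q + 1) → A.Line) (hL : IsKakeyaLines A L) (P : A.Point)
    (hP : knotCount A L P = q - 1) (hmax : ∀ p : A.Point, knotCount A L p ≤ q - 1)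
    (hlow : q ^ 2 - 2 * q + 3 ≤ (kakeyaSet A L).ncard)
    (hhigh : (kakeyaSet A L).ncard ≤ q ^ 2 - 2 * q + 4) :
    (kakeyaSet A L).ncard = q ^ 2 - 2 * q + 4 := by
  have hfin : Finite A.Point := A.finitePoint (by omega)
  -- the pencil of lines through P
  choose f hf using fun c => (A.point_class P c).exists
  -- S = set of classes whose chosen line passes through P
  set S : Set (Fin (q + 1)) := {c | A.mem P (L c)} with hSdef
  have hS : S.ncard = q - 1 := hP
  -- the complement of S has exactly two elements
  have hScompl : Sᶜ.ncard = 2 := by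
    have := Set.ncard_add_ncard_compl S
    rw [Nat.card_eq_fintype_card, Fintype.card_fin] at this
    omega
  obtain ⟨c₁, c₂, hc12, hcompl⟩ := Set.ncard_eq_two.mp hScompl
  have hc₁ : ¬ A.mem P (L c₁) := by
    have : c₁ ∈ Sᶜ := by rw [hcompl]; exact Set.mem_insert _ _
    exact this
  have hc₂ : ¬ A.mem P (L c₂) := by
    have : c₂ ∈ Sᶜ := by rw [hcompl]; exact Set.mem_insert_of_mem _ rfl
    exact this
  -- P is covered
  have hPK : P ∈ kakeyaSet A L := by
    have hSne : S.Nonempty := by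
      apply Set.nonempty_of_ncard_ne_zero
      omega
    obtain ⟨c, hc⟩ := hSne
    exact ⟨c, hc⟩
  -- meet points of the pencil lines m_i = f c_i with the opposite Kakeya lines
  have hne₁ : A.parClass (f c₁) ≠ A.parClass (L c₂) := by
    rw [(hf c₁).1, hL c₂]; exact hc12
  have hne₂ : A.parClass (f c₂) ≠ A.parClass (L c₁) := by
    rw [(hf c₂).1, hL c₁]; exact fun h => hc12 h.symm
  obtain ⟨x₁, ⟨hx₁m, hx₁L⟩, -⟩ := A.meet _ _ hne₁
  obtain ⟨x₂, ⟨hx₂m, hx₂L⟩, -⟩ := A.meet _ _ hne₂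
  -- every uncovered point lies on m₁ or m₂, and differs from P, x₁, x₂
  set B : Set A.Point :=
    ({p | A.mem p (f c₁)} \ {P, x₁}) ∪ ({p | A.mem p (f c₂)} \ {P, x₂}) with hBdef
  have hsub : (kakeyaSet A L)ᶜ ⊆ B := by
    intro x hx
    have hxP : x ≠ P := fun h => hx (h ▸ hPK)
    obtain ⟨c, hc⟩ := A.join (by omega) hf hxP
    have hcS : c ∉ S := by
      intro hcmem
      have : L c = f c := A.line_eq (by rw [hL c, (hf c).1]) hcmem (hf c).2
      exact hx ⟨c, this ▸ hc⟩
    have hcc : c = c₁ ∨ c = c₂ := by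
      have : c ∈ Sᶜ := hcS
      rw [hcompl] at this
      exact this
    have hxx₁ : x ≠ x₁ := fun h => hx ⟨c₂, h ▸ hx₁L⟩
    have hxx₂ : x ≠ x₂ := fun h => hx ⟨c₁, h ▸ hx₂L⟩
    rcases hcc with h | h
    · exact Or.inl ⟨h ▸ hc, by simp [hxP, hxx₁]⟩
    · exact Or.inr ⟨h ▸ hc, by simp [hxP, hxx₂]⟩
  -- B has at most 2q - 4 points
  have hPx₁ : P ≠ x₁ := fun h => hc₂ (h ▸ hx₁L)
  have hPx₂ : P ≠ x₂ := fun h => hc₁ (h ▸ hx₂L)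
  have hB1 : ({p | A.mem p (f c₁)} \ {P, x₁}).ncard = q - 2 := by
    rw [Set.ncard_diff (by
      rintro y (rfl | rfl)
      · exact (hf c₁).2
      · exact hx₁m), Set.ncard_pair hPx₁, A.lineSize]
  have hB2 : ({p | A.mem p (f c₂)} \ {P, x₂}).ncard = q - 2 := by
    rw [Set.ncard_diff (by
      rintro y (rfl | rfl)
      · exact (hf c₂).2
      · exact hx₂m), Set.ncard_pair hPx₂, A.lineSize]
  have hBcard : B.ncard ≤ 2 * q - 4 := by
    calc B.ncard ≤ _ + _ := Set.ncard_union_le _ _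
    _ ≤ 2 * q - 4 := by rw [hB1, hB2]; omega
  have hcomplK : (kakeyaSet A L)ᶜ.ncard ≤ 2 * q - 4 :=
    le_trans (Set.ncard_le_ncard hsub (Set.toFinite _)) hBcard
  have htot := Set.ncard_add_ncard_compl (kakeyaSet A L)
  rw [A.pointCount] at htot
  have hqq : q ^ 2 = q * q := sq q
  have h2q : 2 * q + 4 ≤ q * q + 4 := by nlinarith
  omega
end
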